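/- arXiv:2306.02126 — 5 statements merged into one kernel-verified Lean document; each statement's English description precedes it below -/
import Mathlib

section
/- Let 0 = τ₀ < τ₁ < … < τ_T < τ_{T+1} = 1 be ordered quantile levels and set ε = max_{t=1,…,T+1} (τ_t − τ_{t−1}). Suppose F and G are distribution functions on [0,1] and there exist points y₁ ≤ … ≤ y_T in [0,1] such that F(y_t) = G(y_t) = τ_t for every t = 1, …, T. Then |F(y) − G(y)| ≤ ε for every y ∈ ℝ. -/
open MeasureTheory Filter Set

/-- A distribution function on `[0,1]`: nondecreasing, right-continuous, with values in `[0,1]`,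
equal to `0` below `0` and equal to `1` from `1` on. -/
def IsDistFunOn01 (F : ℝ → ℝ) : Prop :=
  Monotone F ∧ (∀ y : ℝ, ContinuousWithinAt F (Set.Ici y) y) ∧
    (∀ y : ℝ, F y ∈ Set.Icc (0 : ℝ) 1) ∧ (∀ y : ℝ, y < 0 → F y = 0) ∧
    (∀ y : ℝ, 1 ≤ y → F y = 1)

/-- If two distribution functions on `[0,1]` agree at points realizing a common grid of
quantile levels `0 = τ₀ < τ₁ < ⋯ < τ_T < τ_{T+1} = 1`, then they differ pointwise by at most
the largest gap `ε = max_{t=1,…,T+1} (τ_t − τ_{t−1})`. -/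
theorem pointwise_bound_of_shared_quantiles
    (T : ℕ) (τ : ℕ → ℝ)
    (hτ0 : τ 0 = 0) (hτlast : τ (T + 1) = 1)
    (hτmono : ∀ t, t ≤ T → τ t < τ (t + 1))
    (ε : ℝ)
    (hε : ε = (Finset.Icc 1 (T + 1)).sup'
      (Finset.nonempty_Icc.mpr (by omega)) (fun t => τ t - τ (t - 1)))
    (F G : ℝ → ℝ) (hF : IsDistFunOn01 F) (hG : IsDistFunOn01 G)
    (y : ℕ → ℝ)
    (hy_mem : ∀ t, 1 ≤ t → t ≤ T → y t ∈ Set.Icc (0 : ℝ) 1)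
    (hy_mono : ∀ s t, 1 ≤ s → s ≤ t → t ≤ T → y s ≤ y t)
    (hFy : ∀ t, 1 ≤ t → t ≤ T → F (y t) = τ t)
    (hGy : ∀ t, 1 ≤ t → t ≤ T → G (y t) = τ t) :
    ∀ z : ℝ, |F z - G z| ≤ ε := by
  intro z
  obtain ⟨hFmono, -, hFrange, -, hF1⟩ := hF
  obtain ⟨hGmono, -, hGrange, -, hG1⟩ := hG
  -- gap bound
  have hgap : ∀ t : ℕ, 1 ≤ t → t ≤ T + 1 → τ t - τ (t - 1) ≤ ε := by
    intro t h1 h2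
    rw [hε]
    exact Finset.le_sup' (fun t => τ t - τ (t - 1)) (Finset.mem_Icc.mpr ⟨h1, h2⟩)
  have key : ∀ a b : ℝ, a ≤ F z → F z ≤ b → a ≤ G z → G z ≤ b → b - a ≤ ε →
      |F z - G z| ≤ ε := by
    intro a b h1 h2 h3 h4 h5
    rw [abs_sub_le_iff]
    constructor <;> linarith
  set S := (Finset.Icc 1 T).filter (fun t => y t ≤ z) with hS
  by_cases hne : S.Nonempty
  · set t := S.max' hne with ht
    have htS : t ∈ S := S.max'_mem hne
    obtain ⟨htI, hyt⟩ := Finset.mem_filter.mp htS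
    obtain ⟨ht1, htT⟩ := Finset.mem_Icc.mp htI
    have hlow : τ t ≤ F z := by
      rw [← hFy t ht1 htT]; exact hFmono hyt
    have hlowG : τ t ≤ G z := by
      rw [← hGy t ht1 htT]; exact hGmono hyt
    by_cases hTt : t = T
    · have hFz : F z ≤ τ (T + 1) := by rw [hτlast]; exact (hFrange z).2
      have hGz : G z ≤ τ (T + 1) := by rw [hτlast]; exact (hGrange z).2
      rw [hTt] at hlow hlowG
      have := hgap (T + 1) (by omega) (by omega)
      simp only [Nat.add_sub_cancel] at this
      exact key _ _ hlow hFz hlowG hGz this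
    · have ht' : t + 1 ≤ T := by omega
      have hnot : t + 1 ∉ S := by
        intro h
        have := S.le_max' _ h
        omega
      have hz : z < y (t + 1) := by
        by_contra h
        exact hnot (Finset.mem_filter.mpr ⟨Finset.mem_Icc.mpr ⟨by omega, ht'⟩, le_of_not_gt h⟩)
      have hFz : F z ≤ τ (t + 1) := by
        rw [← hFy (t + 1) (by omega) ht']; exact hFmono hz.le
      have hGz : G z ≤ τ (t + 1) := by
        rw [← hGy (t + 1) (by omega) ht']; exact hGmono hz.le
      have := hgap (t + 1) (by omega) (by omega)
      simp only [Nat.add_sub_cancel] at this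
      exact key _ _ hlow hFz hlowG hGz this
  · -- z below all y t (or T = 0): F z, G z ∈ [0, τ 1]
    have hFz : F z ≤ τ 1 := by
      rcases Nat.eq_zero_or_pos T with hT | hT
      · subst hT; rw [show (1 : ℕ) = 0 + 1 from rfl, hτlast]; exact (hFrange z).2
      · have h1 : (1 : ℕ) ∈ Finset.Icc 1 T := Finset.mem_Icc.mpr ⟨le_refl 1, hT⟩
        have : z < y 1 := by
          by_contra h
          exact hne ⟨1, Finset.mem_filter.mpr ⟨h1, le_of_not_gt h⟩⟩
        rw [← hFy 1 le_rfl hT]; exact hFmono this.le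
    have hGz : G z ≤ τ 1 := by
      rcases Nat.eq_zero_or_pos T with hT | hT
      · subst hT; rw [show (1 : ℕ) = 0 + 1 from rfl, hτlast]; exact (hGrange z).2
      · have h1 : (1 : ℕ) ∈ Finset.Icc 1 T := Finset.mem_Icc.mpr ⟨le_refl 1, hT⟩
        have : z < y 1 := by
          by_contra h
          exact hne ⟨1, Finset.mem_filter.mpr ⟨h1, le_of_not_gt h⟩⟩
        rw [← hGy 1 le_rfl hT]; exact hGmono this.le
    have := hgap 1 le_rfl (by omega)
    simp only [Nat.sub_self, hτ0] at this
    exact key 0 (τ 1) (hFrange z).1 hFz (hGrange z).1 hGz (by linarith)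
end

section
/- Let (Ω, ℬ, μ) be a probability space. For each m ≥ 1, let 𝒯_m ⊂ (0,1) be a finite set of quantile levels with 𝒯_m ⊆ 𝒯_{m+1}, and suppose ∪_{m=1}^∞ 𝒯_m is dense in [0,1]. Let D be the space of distribution functions on [0,1] equipped with the Lévy metric, and let F^m : Ω → D be Borel measurable maps such that for every ω ∈ Ω, all m ≤ n, and every τ ∈ 𝒯_m there exists a point y (depending on ω, m, n, τ) with F^m(ω)(y) = F^n(ω)(y) = τ. Then the pushforward probability measures μ_m = (F^m)_*μ on D form a Cauchy sequence under the Prokhorov metric. -/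
/-! If `𝒯 M` is a `δ`-net of `[0,1]` (true for large `M`, by compactness and density), then for
`M ≤ m ≤ n` the functions `F^m(ω)` and `F^n(ω)` are uniformly `2δ`-close: a level `τ ∈ 𝒯 M`
strictly between `F^n(ω)(y)` and `F^m(ω)(y)` is attained by both at a common point, which
contradicts monotonicity on one side of `y`. A uniform bound dominates the Lévy distance, and a
bound `d(X ω, Y ω) ≤ c` for all `ω` bounds the Prokhorov distance of the pushforwards by `c`. -/

open MeasureTheory Filter Set

/-- The Lévy distance between two (distribution) functions:
`d_L(F,G) = inf {ε > 0 : F(y − ε) − ε ≤ G(y) ≤ F(y + ε) + ε for all y}`. -/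
noncomputable def levyDist (F G : ℝ → ℝ) : ℝ :=
  sInf {ε : ℝ | 0 < ε ∧ ∀ y : ℝ, F (y - ε) - ε ≤ G y ∧ G y ≤ F (y + ε) + ε}

/-- The space `D` of all distribution functions on `[0,1]`. -/
def DistFun01 : Type := {F : ℝ → ℝ // IsDistFunOn01 F}

open Metric

lemma sub_le_of_shared_quantiles {F G : ℝ → ℝ} (hF : Monotone F) (hG : Monotone G)
    (hF01 : ∀ y, F y ∈ Icc (0 : ℝ) 1) (hG01 : ∀ y, G y ∈ Icc (0 : ℝ) 1)
    {T : Set ℝ} {δ : ℝ} (hT : Icc (0 : ℝ) 1 ⊆ thickening δ T)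
    (hshare : ∀ τ ∈ T, ∃ y, F y = τ ∧ G y = τ) (y : ℝ) :
    F y - G y ≤ 2 * δ := by
  by_contra! hgap
  have hmid : (F y + G y) / 2 ∈ Icc (0 : ℝ) 1 :=
    ⟨by linarith [(hF01 y).1, (hG01 y).1], by linarith [(hF01 y).2, (hG01 y).2]⟩
  obtain ⟨τ, hτT, hτ⟩ := mem_thickening_iff.mp (hT hmid)
  rw [Real.dist_eq, abs_lt] at hτ
  obtain ⟨y₀, hFy₀, hGy₀⟩ := hshare τ hτT
  rcases le_total y₀ y with hle | hle
  · linarith [hG hle]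
  · linarith [hF hle]

lemma abs_sub_le_of_shared_quantiles {F G : ℝ → ℝ} (hF : Monotone F) (hG : Monotone G)
    (hF01 : ∀ y, F y ∈ Icc (0 : ℝ) 1) (hG01 : ∀ y, G y ∈ Icc (0 : ℝ) 1)
    {T : Set ℝ} {δ : ℝ} (hT : Icc (0 : ℝ) 1 ⊆ thickening δ T)
    (hshare : ∀ τ ∈ T, ∃ y, F y = τ ∧ G y = τ) (y : ℝ) :
    |F y - G y| ≤ 2 * δ := by
  have hshare' : ∀ τ ∈ T, ∃ y, G y = τ ∧ F y = τ := fun τ hτ => (hshare τ hτ).imp fun _ => And.symm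
  rw [abs_sub_le_iff]
  exact ⟨sub_le_of_shared_quantiles hF hG hF01 hG01 hT hshare y,
    sub_le_of_shared_quantiles hG hF hG01 hF01 hT hshare' y⟩

lemma levyDist_le_of_abs_sub_le {F G : ℝ → ℝ} (hF : Monotone F) {c : ℝ} (hc : 0 ≤ c)
    (h : ∀ y, |F y - G y| ≤ c) : levyDist F G ≤ c := by
  refine le_of_forall_pos_le_add fun η hη =>
    csInf_le ⟨0, fun _ hε => hε.1.le⟩ ⟨by linarith, fun y => ?_⟩
  have hleft : F (y - (c + η)) ≤ F y := hF (by linarith)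
  have hright : F y ≤ F (y + (c + η)) := hF (by linarith)
  have hy := abs_le.mp (h y)
  exact ⟨by linarith, by linarith⟩

lemma map_apply_le_map_thickening {Ω X : Type*} [MeasurableSpace Ω] [PseudoMetricSpace X]
    [MeasurableSpace X] (μ : Measure Ω) {f g : Ω → X} (hf : AEMeasurable f μ)
    (hg : AEMeasurable g μ) {r : ℝ} (h : ∀ ω, dist (f ω) (g ω) < r) {B : Set X}
    (hB : MeasurableSet B) : μ.map f B ≤ μ.map g (thickening r B) := by
  rw [Measure.map_apply_of_aemeasurable hf hB]
  refine le_trans (measure_mono fun ω hω => ?_) (Measure.le_map_apply hg _)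
  exact mem_thickening_iff.mpr ⟨f ω, hω, by rw [dist_comm]; exact h ω⟩

lemma levyProkhorovDist_map_le {Ω X : Type*} [MeasurableSpace Ω] [PseudoMetricSpace X]
    [MeasurableSpace X] (μ : Measure Ω) {f g : Ω → X} (hf : AEMeasurable f μ)
    (hg : AEMeasurable g μ) {c : ℝ} (hc : 0 ≤ c) (h : ∀ ω, dist (f ω) (g ω) ≤ c) :
    levyProkhorovDist (μ.map f) (μ.map g) ≤ c := by
  refine ENNReal.toReal_le_of_le_ofReal hc <| levyProkhorovEDist_le_of_forall _ _ _
    fun ε B hε hεtop hB => ?_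
  have hlt : ∀ ω, dist (f ω) (g ω) < ε.toReal :=
    fun ω => (h ω).trans_lt ((ENNReal.ofReal_lt_iff_lt_toReal hc hεtop.ne).mp hε)
  exact ⟨(map_apply_le_map_thickening μ hf hg hlt hB).trans le_self_add,
    (map_apply_le_map_thickening μ hg hf (fun ω => dist_comm (f ω) (g ω) ▸ hlt ω) hB).trans
      le_self_add⟩

lemma IsCompact.exists_subset_thickening_of_directed {X ι : Type*} [PseudoMetricSpace X]
    [Nonempty ι] {K : Set X} (hK : IsCompact K) {S : ι → Set X} (hS : Directed (· ⊆ ·) S)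
    (hKS : K ⊆ closure (⋃ i, S i)) {δ : ℝ} (hδ : 0 < δ) : ∃ i, K ⊆ thickening δ (S i) :=
  hK.elim_directed_cover (fun i => thickening δ (S i)) (fun _ => isOpen_thickening)
    (hKS.trans <| (closure_subset_thickening hδ _).trans (thickening_iUnion δ S).le)
    (hS.mono_comp (· ⊆ ·) (g := thickening δ) fun _ _ => thickening_subset_of_subset δ)

theorem pushforward_cauchy_in_prokhorov_general
    {Ω : Type*} [MeasurableSpace Ω] (μ : Measure Ω)
    [MetricSpace DistFun01] [MeasurableSpace DistFun01]
    (hdist : ∀ F G : DistFun01, dist F G = levyDist F.1 G.1)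
    (𝒯 : ℕ → Finset ℝ)
    (h𝒯sub : ∀ m, 1 ≤ m → 𝒯 m ⊆ 𝒯 (m + 1))
    (hdense : Set.Icc (0 : ℝ) 1 ⊆ closure (⋃ m ∈ Set.Ici 1, ((𝒯 m : Set ℝ))))
    (F : ℕ → Ω → DistFun01)
    (hFmeas : ∀ m, 1 ≤ m → Measurable (F m))
    (hshare : ∀ (ω : Ω) (m n : ℕ), 1 ≤ m → m ≤ n → ∀ τ ∈ 𝒯 m,
      ∃ y : ℝ, (F m ω).1 y = τ ∧ (F n ω).1 y = τ) :
    ∀ ε : ℝ, 0 < ε → ∃ M : ℕ, 1 ≤ M ∧ ∀ m n : ℕ, M ≤ m → M ≤ n →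
      levyProkhorovDist (μ.map (F m)) (μ.map (F n)) < ε := by
  intro ε hε
  have hnest : ∀ ⦃m n⦄, 1 ≤ m → m ≤ n → 𝒯 m ⊆ 𝒯 n :=
    Nat.rel_of_forall_rel_succ_of_le_of_le (fun s t : Finset ℝ => s ⊆ t) (f := 𝒯) h𝒯sub
  have hdirected : Directed (· ⊆ ·) fun m : Ici 1 => (𝒯 m : Set ℝ) :=
    Monotone.directed_le fun m _ hmn => Finset.coe_subset.mpr (hnest m.2 hmn)
  have hdense' : Icc (0 : ℝ) 1 ⊆ closure (⋃ m : Ici 1, (𝒯 m : Set ℝ)) := by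
    rwa [← biUnion_eq_iUnion (Ici 1) fun m _ => (𝒯 m : Set ℝ)]
  have : Nonempty (Ici 1) := nonempty_Ici.to_subtype
  obtain ⟨⟨M, hM⟩, hnet⟩ := isCompact_Icc.exists_subset_thickening_of_directed hdirected hdense'
    (by positivity : 0 < ε / 4)
  have hclose : ∀ m n, M ≤ m → m ≤ n →
      levyProkhorovDist (μ.map (F m)) (μ.map (F n)) ≤ ε / 2 := by
    intro m n hMm hmn
    refine levyProkhorovDist_map_le μ (hFmeas m (hM.trans hMm)).aemeasurable
      (hFmeas n (hM.trans (hMm.trans hmn))).aemeasurable (by positivity) fun ω => ?_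
    obtain ⟨hFm, -, hFm01, -⟩ := (F m ω).2
    obtain ⟨hFn, -, hFn01, -⟩ := (F n ω).2
    rw [hdist, show ε / 2 = 2 * (ε / 4) by ring]
    exact levyDist_le_of_abs_sub_le hFm (by positivity) <| abs_sub_le_of_shared_quantiles
      hFm hFn hFm01 hFn01 hnet fun τ hτ => hshare ω m n (hM.trans hMm) hmn τ (hnest hM hMm hτ)
  refine ⟨M, hM, fun m n hMm hMn => ?_⟩
  rcases le_total m n with hmn | hnm
  · linarith [hclose m n hMm hmn]
  · linarith [hclose n m hMn hnm, levyProkhorovDist_comm (μ.map (F m)) (μ.map (F n))]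

/-- Suppose `D`, the space of distribution functions on `[0,1]`, is equipped with the Lévy
metric, and `F^m : Ω → D` are Borel measurable maps such that, for all `ω`, any `F^m(ω)` and
`F^n(ω)` with `1 ≤ m ≤ n` share a point realizing each quantile level `τ ∈ 𝒯_m`, where the
finite sets `𝒯_m ⊂ (0,1)` are nested with union dense in `[0,1]`.  Then the pushforward
probability measures `μ_m = (F^m)_*μ` form a Cauchy sequence in the Prokhorov metric. -/
theorem pushforward_cauchy_in_prokhorov
    {Ω : Type*} [MeasurableSpace Ω] (μ : Measure Ω) [IsProbabilityMeasure μ]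
    [MetricSpace DistFun01] [MeasurableSpace DistFun01] [BorelSpace DistFun01]
    (hdist : ∀ F G : DistFun01, dist F G = levyDist F.1 G.1)
    (𝒯 : ℕ → Finset ℝ)
    (h𝒯sub : ∀ m, 1 ≤ m → 𝒯 m ⊆ 𝒯 (m + 1))
    (h𝒯mem : ∀ m, 1 ≤ m → ∀ τ ∈ 𝒯 m, τ ∈ Set.Ioo (0 : ℝ) 1)
    (hdense : Set.Icc (0 : ℝ) 1 ⊆ closure (⋃ m ∈ Set.Ici 1, ((𝒯 m : Set ℝ))))
    (F : ℕ → Ω → DistFun01)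
    (hFmeas : ∀ m, 1 ≤ m → Measurable (F m))
    (hshare : ∀ (ω : Ω) (m n : ℕ), 1 ≤ m → m ≤ n → ∀ τ ∈ 𝒯 m,
      ∃ y : ℝ, (F m ω).1 y = τ ∧ (F n ω).1 y = τ) :
    ∀ ε : ℝ, 0 < ε → ∃ M : ℕ, 1 ≤ M ∧ ∀ m n : ℕ, M ≤ m → M ≤ n →
      levyProkhorovDist (μ.map (F m)) (μ.map (F n)) < ε :=
  pushforward_cauchy_in_prokhorov_general μ hdist 𝒯 h𝒯sub hdense F hFmeas hshare
end

section
/- Let (Ω, ℬ, μ) be a probability space. For each m ≥ 1, let 𝒯_m ⊂ (0,1) be a finite set of quantile levels with 𝒯_m ⊆ 𝒯_{m+1}, and suppose ∪_{m=1}^∞ 𝒯_m is dense in [0,1]. Let D be the space of distribution functions on [0,1] equipped with the Lévy metric, and let F^m : Ω → D be Borel measurable maps such that for every ω ∈ Ω, all m ≤ n, and every τ ∈ 𝒯_m there exists a point y with F^m(ω)(y) = F^n(ω)(y) = τ. Then there exists a Borel probability measure μ_∞ on D such that the pushforward measures μ_m = (F^m)_*μ converge to μ_∞ in the Prokhorov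 metric; that is, the quantile pyramid exists as a distribution-valued random element with law μ_∞. -/
open MeasureTheory Filter Set
open scoped Topology

/-- Lévy distance is bounded by the sup-distance. -/
lemma levyDist_le_of_forall_abs_le {F G : ℝ → ℝ} (hF : Monotone F) {δ : ℝ} (hδ : 0 ≤ δ)
    (h : ∀ y, |F y - G y| ≤ δ) : levyDist F G ≤ δ := by
  refine le_of_forall_gt_imp_ge_of_dense fun ε hε => ?_
  refine csInf_le ⟨0, fun x hx => hx.1.le⟩ ⟨hδ.trans_lt hε, fun y => ?_⟩
  have h1 := abs_le.1 (h y)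
  constructor
  · have := hF (show y - ε ≤ y by linarith)
    linarith [h1.2]
  · have := hF (show y ≤ y + ε by linarith)
    linarith [h1.1]

lemma shared_aux_not_lt {F G : ℝ → ℝ} (hF : Monotone F) (hG : Monotone G)
    (hF01 : ∀ y, F y ∈ Set.Icc (0:ℝ) 1) (hG01 : ∀ y, G y ∈ Set.Icc (0:ℝ) 1)
    {ε : ℝ}
    (hdense : ∀ t ∈ Set.Icc (0:ℝ) 1, ∃ τ, |τ - t| ≤ ε ∧ ∃ z, F z = τ ∧ G z = τ)
    {y : ℝ} (h : F y + 2*ε < G y) : False := by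
  obtain ⟨τ, hτ, z, hFz, hGz⟩ := hdense ((F y + G y)/2)
    ⟨by linarith [(hF01 y).1, (hG01 y).1], by linarith [(hF01 y).2, (hG01 y).2]⟩
  have h1 := abs_le.1 hτ
  have hzy : y < z := by
    by_contra hc
    push_neg at hc
    have := hF hc
    linarith [h1.1]
  have := hG hzy.le
  linarith [h1.2]

lemma abs_le_of_shared {F G : ℝ → ℝ} (hF : Monotone F) (hG : Monotone G)
    (hF01 : ∀ y, F y ∈ Set.Icc (0:ℝ) 1) (hG01 : ∀ y, G y ∈ Set.Icc (0:ℝ) 1)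
    {ε : ℝ}
    (hdense : ∀ t ∈ Set.Icc (0:ℝ) 1, ∃ τ, |τ - t| ≤ ε ∧ ∃ z, F z = τ ∧ G z = τ)
    (y : ℝ) : |F y - G y| ≤ 2*ε := by
  have hdense' : ∀ t ∈ Set.Icc (0:ℝ) 1, ∃ τ, |τ - t| ≤ ε ∧ ∃ z, G z = τ ∧ F z = τ := by
    intro t ht
    obtain ⟨τ, h1, z, h2, h3⟩ := hdense t ht
    exact ⟨τ, h1, z, h3, h2⟩
  rw [abs_le]
  constructor
  · by_contra hc
    push_neg at hc
    exact shared_aux_not_lt hF hG hF01 hG01 hdense (by linarith)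
  · by_contra hc
    push_neg at hc
    exact shared_aux_not_lt hG hF hG01 hF01 hdense' (by linarith)

lemma T_subset_of_le (𝒯 : ℕ → Finset ℝ) (h : ∀ m, 1 ≤ m → 𝒯 m ⊆ 𝒯 (m + 1)) :
    ∀ m n, 1 ≤ m → m ≤ n → 𝒯 m ⊆ 𝒯 n := by
  intro m n hm hmn
  induction n, hmn using Nat.le_induction with
  | base => exact subset_rfl
  | succ n hn ih => exact ih.trans (h n (hm.trans hn))

lemma mesh_exists (𝒯 : ℕ → Finset ℝ)
    (h𝒯sub : ∀ m, 1 ≤ m → 𝒯 m ⊆ 𝒯 (m + 1))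
    (hdense : Set.Icc (0 : ℝ) 1 ⊆ closure (⋃ m ∈ Set.Ici 1, ((𝒯 m : Set ℝ))))
    {ε : ℝ} (hε : 0 < ε) :
    ∃ M, 1 ≤ M ∧ ∀ t ∈ Set.Icc (0:ℝ) 1, ∃ τ ∈ 𝒯 M, |τ - t| ≤ ε := by
  obtain ⟨N, hN⟩ := exists_nat_one_div_lt (show (0:ℝ) < ε/2 by linarith)
  set Nr : ℝ := (N:ℝ) + 1 with hNr
  have hNpos : (0:ℝ) < Nr := by positivity
  have hNd : 1 / Nr < ε/2 := hN
  have H : ∀ i : Fin (N+2), ∃ m, 1 ≤ m ∧ ∃ τ ∈ 𝒯 m, |τ - ((i:ℕ):ℝ)/Nr| < ε/2 := by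
    intro i
    have hile : (i:ℕ) ≤ N+1 := Nat.lt_succ_iff.mp i.2
    have hmem : ((i:ℕ):ℝ)/Nr ∈ Set.Icc (0:ℝ) 1 := by
      constructor
      · positivity
      · rw [div_le_one hNpos]
        have : ((i:ℕ):ℝ) ≤ (N:ℝ)+1 := by exact_mod_cast hile
        linarith
    have hcl := hdense hmem
    rw [Metric.mem_closure_iff] at hcl
    obtain ⟨u, hu, hud⟩ := hcl (ε/2) (by linarith)
    simp only [Set.mem_iUnion, Set.mem_Ici] at hu
    obtain ⟨m, hm1, hum⟩ := hu
    refine ⟨m, hm1, u, hum, ?_⟩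
    rw [Real.dist_eq, abs_sub_comm] at hud
    exact hud
  choose f hf1 hf2 using H
  set M := Finset.univ.sup f with hM
  have hM1 : 1 ≤ M := le_trans (hf1 0) (Finset.le_sup (Finset.mem_univ 0))
  refine ⟨M, hM1, fun t ht => ?_⟩
  set i : ℕ := ⌊t * Nr⌋₊ with hi
  have hiN : i ≤ N + 1 := by
    have h1 : t * Nr ≤ Nr := by nlinarith [ht.1, ht.2]
    calc i ≤ ⌊Nr⌋₊ := Nat.floor_mono h1
      _ = N+1 := by
          rw [hNr, show (N:ℝ)+1 = ((N+1:ℕ):ℝ) by push_cast; ring, Nat.floor_natCast]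
  have hfl1 : (i:ℝ) ≤ t * Nr := Nat.floor_le (by nlinarith [ht.1])
  have hfl2 : t * Nr < (i:ℝ) + 1 := Nat.lt_floor_add_one (t*Nr)
  have ha : (i:ℝ)/Nr ≤ t := by
    rw [div_le_iff₀ hNpos]; exact hfl1
  have hb : t < ((i:ℝ)+1)/Nr := by
    rw [lt_div_iff₀ hNpos]; exact hfl2
  have hdiff : |(i:ℝ)/Nr - t| ≤ 1/Nr := by
    rw [abs_le]
    constructor
    · have heq : ((i:ℝ)+1)/Nr = (i:ℝ)/Nr + 1/Nr := by ring
      linarith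
    · have h1N : (0:ℝ) < 1/Nr := by positivity
      linarith
  have hiNlt : i < N + 2 := by omega
  obtain ⟨τ, hτM, hτd⟩ := hf2 ⟨i, hiNlt⟩
  have hsub : 𝒯 (f ⟨i, hiNlt⟩) ⊆ 𝒯 M :=
    T_subset_of_le 𝒯 h𝒯sub _ M (hf1 ⟨i, hiNlt⟩) (Finset.le_sup (Finset.mem_univ _)) 
  refine ⟨τ, hsub hτM, ?_⟩
  have hcoe : (((⟨i, hiNlt⟩ : Fin (N+2)) : ℕ) : ℝ) = (i:ℝ) := rfl
  rw [hcoe] at hτd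
  calc |τ - t| ≤ |τ - (i:ℝ)/Nr| + |(i:ℝ)/Nr - t| := abs_sub_le _ _ _
    _ ≤ ε := by linarith

/-- Suppose `D`, the space of distribution functions on `[0,1]`, is equipped with the Lévy
metric, and `F^m : Ω → D` are Borel measurable maps such that, for all `ω`, any `F^m(ω)` and
`F^n(ω)` with `1 ≤ m ≤ n` share a point realizing each quantile level `τ ∈ 𝒯_m`, where the
finite sets `𝒯_m ⊂ (0,1)` are nested with union dense in `[0,1]`.  Then the pushforward
probability measures `μ_m = (F^m)_*μ` converge in the Prokhorov metric to some Borel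
probability measure `μ_∞` on `D`: the quantile pyramid exists as a distribution-valued random
element with law `μ_∞`. -/
theorem pushforward_tendsto_limit_in_prokhorov
    {Ω : Type*} [MeasurableSpace Ω] (μ : Measure Ω) [IsProbabilityMeasure μ]
    [MetricSpace DistFun01] [MeasurableSpace DistFun01] [BorelSpace DistFun01]
    (hdist : ∀ F G : DistFun01, dist F G = levyDist F.1 G.1)
    (𝒯 : ℕ → Finset ℝ)
    (h𝒯sub : ∀ m, 1 ≤ m → 𝒯 m ⊆ 𝒯 (m + 1))
    (h𝒯mem : ∀ m, 1 ≤ m → ∀ τ ∈ 𝒯 m, τ ∈ Set.Ioo (0 : ℝ) 1)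
    (hdense : Set.Icc (0 : ℝ) 1 ⊆ closure (⋃ m ∈ Set.Ici 1, ((𝒯 m : Set ℝ))))
    (F : ℕ → Ω → DistFun01)
    (hFmeas : ∀ m, 1 ≤ m → Measurable (F m))
    (hshare : ∀ (ω : Ω) (m n : ℕ), 1 ≤ m → m ≤ n → ∀ τ ∈ 𝒯 m,
      ∃ y : ℝ, (F m ω).1 y = τ ∧ (F n ω).1 y = τ) :
    ∃ μ_inf : Measure DistFun01, IsProbabilityMeasure μ_inf ∧
      Filter.Tendsto (fun m : ℕ => levyProkhorovDist (μ.map (F m)) μ_inf)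
        Filter.atTop (nhds 0) := by
  classical
  -- uniform closeness between F m and F n for m, n large
  have key : ∀ ε : ℝ, 0 < ε → ∃ M : ℕ, 1 ≤ M ∧ ∀ ω m n, M ≤ m → m ≤ n → ∀ y,
      |(F m ω).1 y - (F n ω).1 y| ≤ 2*ε := by
    intro ε hε
    obtain ⟨M, hM1, hMd⟩ := mesh_exists 𝒯 h𝒯sub hdense hε
    refine ⟨M, hM1, fun ω m n hm hmn y => ?_⟩
    refine abs_le_of_shared (F m ω).2.1 (F n ω).2.1 (F m ω).2.2.2.1 (F n ω).2.2.2.1 ?_ y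
    intro t ht
    obtain ⟨τ, hτM, hτd⟩ := hMd t ht
    have hτm : τ ∈ 𝒯 m := T_subset_of_le 𝒯 h𝒯sub M m hM1 hm hτM
    obtain ⟨z, hz1, hz2⟩ := hshare ω m n (hM1.trans hm) hmn τ hτm
    exact ⟨τ, hτd, z, hz1, hz2⟩
  -- pointwise limits exist
  have hlim : ∀ (ω : Ω) (y : ℝ), ∃ l, Tendsto (fun m => (F m ω).1 y) atTop (𝓝 l) := by
    intro ω y
    apply cauchySeq_tendsto_of_complete
    rw [Metric.cauchySeq_iff]
    intro ε hε
    obtain ⟨M, hM1, hMk⟩ := key (ε/5) (by linarith)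
    refine ⟨M, fun m hm n hn => ?_⟩
    rw [Real.dist_eq]
    rcases le_total m n with h | h
    · exact lt_of_le_of_lt (hMk ω m n hm h y) (by linarith)
    · rw [abs_sub_comm]
      exact lt_of_le_of_lt (hMk ω n m hn h y) (by linarith)
  choose g hg using hlim
  -- uniform approximation of the limit
  have approx : ∀ ε : ℝ, 0 < ε → ∃ M : ℕ, 1 ≤ M ∧ ∀ ω m, M ≤ m → ∀ y,
      |(F m ω).1 y - g ω y| ≤ 2*ε := by
    intro ε hε
    obtain ⟨M, hM1, hMk⟩ := key ε hε
    refine ⟨M, hM1, fun ω m hm y => ?_⟩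
    have htd : Tendsto (fun n => |(F m ω).1 y - (F n ω).1 y|) atTop
        (𝓝 |(F m ω).1 y - g ω y|) := (tendsto_const_nhds.sub (hg ω y)).abs
    refine le_of_tendsto htd ?_
    filter_upwards [eventually_ge_atTop m] with n hn
    exact hMk ω m n hm hn y
  -- the limit is a distribution function
  have hmono : ∀ ω, Monotone (g ω) := fun ω a b hab =>
    le_of_tendsto_of_tendsto' (hg ω a) (hg ω b) (fun m => (F m ω).2.1 hab)
  have hIcc : ∀ ω y, g ω y ∈ Set.Icc (0:ℝ) 1 := fun ω y =>
    isClosed_Icc.mem_of_tendsto (hg ω y)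
      (Eventually.of_forall fun m => (F m ω).2.2.2.1 y)
  have hzero : ∀ ω y, y < 0 → g ω y = 0 := by
    intro ω y hy
    have heq : (fun m => (F m ω).1 y) = fun _ => (0:ℝ) :=
      funext fun m => (F m ω).2.2.2.2.1 y hy
    exact tendsto_nhds_unique (hg ω y) (heq ▸ tendsto_const_nhds)
  have hone : ∀ ω y, 1 ≤ y → g ω y = 1 := by
    intro ω y hy
    have heq : (fun m => (F m ω).1 y) = fun _ => (1:ℝ) :=
      funext fun m => (F m ω).2.2.2.2.2 y hy
    exact tendsto_nhds_unique (hg ω y) (heq ▸ tendsto_const_nhds)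
  have hrc : ∀ ω y, ContinuousWithinAt (g ω) (Set.Ici y) y := by
    intro ω y
    rw [Metric.continuousWithinAt_iff]
    intro ε hε
    obtain ⟨M, hM1, hMa⟩ := approx (ε/8) (by linarith)
    have hFrc := (F M ω).2.2.1 y
    rw [Metric.continuousWithinAt_iff] at hFrc
    obtain ⟨δ, hδ, hδ'⟩ := hFrc (ε/4) (by linarith)
    refine ⟨δ, hδ, fun z hz hdz => ?_⟩
    have b1 := abs_le.1 (hMa ω M le_rfl z)
    have b2 := abs_le.1 (hMa ω M le_rfl y)
    have b3 := hδ' hz hdz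
    rw [Real.dist_eq] at b3 ⊢
    have b3' := abs_lt.1 b3
    rw [abs_lt]
    constructor <;> linarith [b1.1, b1.2, b2.1, b2.2, b3'.1, b3'.2]
  set Ginf : Ω → DistFun01 := fun ω => ⟨g ω, hmono ω, hrc ω, hIcc ω, hzero ω, hone ω⟩
    with hGinf
  -- distance bound to the limit
  have distb : ∀ ε : ℝ, 0 < ε → ∃ M : ℕ, 1 ≤ M ∧ ∀ ω m, M ≤ m →
      dist (F m ω) (Ginf ω) ≤ 2*ε := by
    intro ε hε
    obtain ⟨M, hM1, hMa⟩ := approx ε hε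
    refine ⟨M, hM1, fun ω m hm => ?_⟩
    rw [hdist]
    exact levyDist_le_of_forall_abs_le (F m ω).2.1 (by linarith) (hMa ω m hm)
  -- pointwise convergence in the metric space
  have htend : ∀ ω, Tendsto (fun m => F m ω) atTop (𝓝 (Ginf ω)) := by
    intro ω
    rw [Metric.tendsto_atTop]
    intro ε hε
    obtain ⟨M, hM1, hMd⟩ := distb (ε/4) (by linarith)
    exact ⟨M, fun m hm => lt_of_le_of_lt (hMd ω m hm) (by linarith)⟩
  have hGmeas : Measurable Ginf := by
    have hshift : ∀ ω, Tendsto (fun n => F (n+1) ω) atTop (𝓝 (Ginf ω)) := fun ω =>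
      (htend ω).comp (tendsto_add_atTop_nat 1)
    exact measurable_of_tendsto_metrizable
      (fun n => hFmeas (n+1) (Nat.le_add_left 1 n))
      (tendsto_pi_nhds.mpr hshift)
  have hGprob : IsProbabilityMeasure (μ.map Ginf) :=
    Measure.isProbabilityMeasure_map hGmeas.aemeasurable
  -- Prokhorov bound from uniform distance bound
  have prok : ∀ (m : ℕ), 1 ≤ m → ∀ δ : ℝ, 0 ≤ δ → (∀ ω, dist (F m ω) (Ginf ω) ≤ δ) →
      levyProkhorovDist (μ.map (F m)) (μ.map Ginf) ≤ δ := by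
    intro m hm δ hδ hb
    haveI : IsProbabilityMeasure (μ.map (F m)) :=
      Measure.isProbabilityMeasure_map (hFmeas m hm).aemeasurable
    apply levyProkhorovDist_le_of_forall_le _ _ hδ
    intro ε B hε hB
    rw [Measure.map_apply (hFmeas m hm) hB,
      Measure.map_apply hGmeas Metric.isOpen_thickening.measurableSet]
    refine le_trans (measure_mono ?_) le_self_add
    intro ω hω
    rw [Set.mem_preimage, Metric.mem_thickening_iff]
    refine ⟨F m ω, hω, ?_⟩
    rw [dist_comm]
    exact lt_of_le_of_lt (hb ω) hε
  refine ⟨μ.map Ginf, hGprob, ?_⟩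
  rw [Metric.tendsto_atTop]
  intro ε hε
  obtain ⟨M, hM1, hMd⟩ := distb (ε/4) (by linarith)
  refine ⟨M, fun m hm => ?_⟩
  have h1 : levyProkhorovDist (μ.map (F m)) (μ.map Ginf) ≤ 2*(ε/4) :=
    prok m (hM1.trans hm) _ (by linarith) (fun ω => hMd ω m hm)
  have h0 : 0 ≤ levyProkhorovDist (μ.map (F m)) (μ.map Ginf) := ENNReal.toReal_nonneg
  rw [Real.dist_eq, sub_zero, abs_of_nonneg h0]
  linarith
end

section
/- Let (Ω, ℬ, μ) be a probability space and S = {x₁, …, x_n} a finite index set. For each m ≥ 1, let 𝒯_m ⊂ (0,1) be a finite set of quantile levels with 𝒯_m ⊆ 𝒯_{m+1}, and suppose ∪_{m=1}^∞ 𝒯_m is dense in [0,1]. Let D be the space of distribution functions on [0,1] with the Lévy metric, and let F^m : Ω → D^S be Borel measurable maps (D^S equipped with the supremum Lévy metric d_{L_u}(F, G) = max_{x ∈ S} d_L(F_x, G_x)) such that for every ω ∈ Ω, all m ≤ n, every x ∈ S, and every τ ∈ 𝒯_m there exists a point y with F_x^m(ω)(y) = F_x^n(ω)(y) = τ. Then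 the pushforward probability measures μ_m = (F^m)_*μ on D^S form a Cauchy sequence under the Prokhorov metric induced by d_{L_u}. -/
open MeasureTheory Filter Set

section Aux

open Metric ENNReal

/-- Nestedness extended: `𝒯 m ⊆ 𝒯 n` for `1 ≤ m ≤ n`. -/
lemma T_mono (𝒯 : ℕ → Finset ℝ) (h𝒯sub : ∀ m, 1 ≤ m → 𝒯 m ⊆ 𝒯 (m + 1)) :
    ∀ m n, 1 ≤ m → m ≤ n → 𝒯 m ⊆ 𝒯 n := by
  intro m n hm hmn
  induction n with
  | zero => omega
  | succ k ih =>
    rcases Nat.lt_or_ge m (k+1) with h | h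
    · exact (ih (by omega)).trans (h𝒯sub k (by omega))
    · have : m = k + 1 := by omega
      subst this; exact subset_rfl

/-- From a finite set of points each in some `𝒯 m`, get a single index `M` containing all. -/
lemma exists_index (𝒯 : ℕ → Finset ℝ) (h𝒯sub : ∀ m, 1 ≤ m → 𝒯 m ⊆ 𝒯 (m + 1))
    (b : Finset ℝ) (hbU : ∀ u ∈ b, ∃ m, 1 ≤ m ∧ u ∈ 𝒯 m) :
    ∃ M, 1 ≤ M ∧ ∀ u ∈ b, u ∈ 𝒯 M := by
  induction b using Finset.induction_on with
  | empty => exact ⟨1, le_rfl, by simp⟩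
  | @insert a s _ ih =>
    obtain ⟨M, hM1, hM⟩ := ih (fun u hu => hbU u (Finset.mem_insert_of_mem hu))
    obtain ⟨m, hm1, hma⟩ := hbU a (Finset.mem_insert_self a s)
    refine ⟨max M m, le_trans hM1 (le_max_left _ _), ?_⟩
    intro u hu
    rcases Finset.mem_insert.mp hu with rfl | hu
    · exact T_mono 𝒯 h𝒯sub m _ hm1 (le_max_right _ _) hma
    · exact T_mono 𝒯 h𝒯sub M _ hM1 (le_max_left _ _) (hM u hu)

/-- Pointwise closeness implies Lévy distance bound. -/
lemma levyDist_le_of_pointwise {F G : ℝ → ℝ} (hF : Monotone F) {c : ℝ} (hc : 0 < c)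
    (h1 : ∀ y, G y ≤ F y + c) (h2 : ∀ y, F y ≤ G y + c) : levyDist F G ≤ c := by
  apply csInf_le
  · exact ⟨0, fun ε hε => hε.1.le⟩
  · refine ⟨hc, fun y => ⟨?_, ?_⟩⟩
    · have := h2 (y - c)
      have := hF (show y - c ≤ y by linarith)
      linarith [h2 y, hF (show y - c ≤ y by linarith)]
    · calc G y ≤ F y + c := h1 y
        _ ≤ F (y + c) + c := by linarith [hF (show y ≤ y + c by linarith)]

/-- Shared quantile points on a δ-net give a pointwise bound `G ≤ F + 3δ`. -/
lemma pointwise_of_shared {F G : ℝ → ℝ} (hF : IsDistFunOn01 F) (hG : IsDistFunOn01 G)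
    (T : Finset ℝ) {δ : ℝ} (hδ : 0 < δ)
    (hnet : ∀ t ∈ Set.Icc (0:ℝ) 1, ∃ τ ∈ T, |t - τ| < δ)
    (hsh : ∀ τ ∈ T, ∃ y, F y = τ ∧ G y = τ) :
    ∀ y, G y ≤ F y + 3 * δ := by
  intro y
  set t := G y with ht
  have htmem : t ∈ Set.Icc (0:ℝ) 1 := hG.2.2.1 y
  rcases le_or_gt t (3 * δ) with h | h
  · have := (hF.2.2.1 y).1; linarith
  · have hmem : t - 2 * δ ∈ Set.Icc (0:ℝ) 1 := ⟨by linarith, by linarith [htmem.2]⟩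
    obtain ⟨τ, hτT, hτ⟩ := hnet _ hmem
    rw [abs_lt] at hτ
    obtain ⟨y', hFy', hGy'⟩ := hsh τ hτT
    have hy' : y' ≤ y := by
      by_contra hcon
      push_neg at hcon
      have := hG.1 hcon.le
      rw [hGy'] at this
      have : t ≤ τ := this
      linarith
    have := hF.1 hy'
    rw [hFy'] at this
    linarith

/-- Prokhorov distance bound from a uniform coupling bound. -/
lemma lp_le {X : Type*} [MeasurableSpace X] [MetricSpace X] [BorelSpace X]
    {Ω : Type*} [MeasurableSpace Ω] (μ : Measure Ω) [IsProbabilityMeasure μ]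
    {f g : Ω → X} (hf : Measurable f) (hg : Measurable g) {c : ℝ} (hc : 0 ≤ c)
    (h : ∀ ω, dist (f ω) (g ω) ≤ c) :
    levyProkhorovDist (μ.map f) (μ.map g) ≤ c := by
  have key : levyProkhorovEDist (μ.map f) (μ.map g) ≤ ENNReal.ofReal c := by
    apply levyProkhorovEDist_le_of_forall
    intro ε B hε hεtop hB
    have hcε : c < ε.toReal := by
      have := (ENNReal.ofReal_lt_iff_lt_toReal hc hεtop.ne).mp hε
      exact this
    have hsub1 : f ⁻¹' B ⊆ g ⁻¹' (thickening ε.toReal B) := by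
      intro ω hω
      rw [Set.mem_preimage, mem_thickening_iff]
      exact ⟨f ω, hω, by rw [dist_comm]; linarith [h ω]⟩
    have hsub2 : g ⁻¹' B ⊆ f ⁻¹' (thickening ε.toReal B) := by
      intro ω hω
      rw [Set.mem_preimage, mem_thickening_iff]
      exact ⟨g ω, hω, by linarith [h ω]⟩
    have hthick : MeasurableSet (thickening ε.toReal B) :=
      isOpen_thickening.measurableSet
    constructor
    · rw [Measure.map_apply hf hB, Measure.map_apply hg hthick]
      exact (measure_mono hsub1).trans le_self_add
    · rw [Measure.map_apply hg hB, Measure.map_apply hf hthick]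
      exact (measure_mono hsub2).trans le_self_add
  calc levyProkhorovDist (μ.map f) (μ.map g)
      ≤ (ENNReal.ofReal c).toReal := ENNReal.toReal_mono ENNReal.ofReal_ne_top key
    _ = c := ENNReal.toReal_ofReal hc

end Aux

/-- Suppose `D^S`, the space of `S`-indexed families of distribution functions on `[0,1]` for a
finite nonempty index set `S`, is equipped with the supremum Lévy metric
`d_{L_u}(F, G) = max_{x ∈ S} d_L(F_x, G_x)`, and `F^m : Ω → D^S` are Borel measurable maps such
that, for all `ω` and all `x ∈ S`, any `F_x^m(ω)` and `F_x^n(ω)` with `1 ≤ m ≤ n` share a point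
realizing each quantile level `τ ∈ 𝒯_m`, where the finite sets `𝒯_m ⊂ (0,1)` are nested with
union dense in `[0,1]`.  Then the pushforward probability measures `μ_m = (F^m)_*μ` form a
Cauchy sequence in the Prokhorov metric induced by `d_{L_u}`. -/
theorem pushforward_cauchy_in_prokhorov_sup
    {Ω S : Type*} [MeasurableSpace Ω] (μ : Measure Ω) [IsProbabilityMeasure μ]
    [Fintype S] [Nonempty S]
    [MetricSpace (S → DistFun01)] [MeasurableSpace (S → DistFun01)]
    [BorelSpace (S → DistFun01)]
    (hdist : ∀ F G : S → DistFun01, dist F G = ⨆ x : S, levyDist (F x).1 (G x).1)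
    (𝒯 : ℕ → Finset ℝ)
    (h𝒯sub : ∀ m, 1 ≤ m → 𝒯 m ⊆ 𝒯 (m + 1))
    (h𝒯mem : ∀ m, 1 ≤ m → ∀ τ ∈ 𝒯 m, τ ∈ Set.Ioo (0 : ℝ) 1)
    (hdense : Set.Icc (0 : ℝ) 1 ⊆ closure (⋃ m ∈ Set.Ici 1, ((𝒯 m : Set ℝ))))
    (F : ℕ → Ω → S → DistFun01)
    (hFmeas : ∀ m, 1 ≤ m → Measurable (F m))
    (hshare : ∀ (ω : Ω) (m n : ℕ), 1 ≤ m → m ≤ n → ∀ x : S, ∀ τ ∈ 𝒯 m,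
      ∃ y : ℝ, (F m ω x).1 y = τ ∧ (F n ω x).1 y = τ) :
    ∀ ε : ℝ, 0 < ε → ∃ M : ℕ, 1 ≤ M ∧ ∀ m n : ℕ, M ≤ m → M ≤ n →
      levyProkhorovDist (μ.map (F m)) (μ.map (F n)) < ε := by
  intro ε hε
  set δ := ε / 7 with hδdef
  have hδ : 0 < δ := by positivity
  -- find a single index M whose grid is a δ-net of [0,1]
  have cover : Set.Icc (0:ℝ) 1 ⊆ ⋃ u ∈ (⋃ m ∈ Set.Ici 1, ((𝒯 m : Set ℝ))), Metric.ball u δ := by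
    intro t ht
    have := hdense ht
    obtain ⟨u, huU, hu⟩ := Metric.mem_closure_iff.mp this δ hδ
    exact Set.mem_biUnion huU (by simpa [Metric.mem_ball, dist_comm] using hu)
  obtain ⟨b, hbsub, hbfin, hbcov⟩ := (isCompact_Icc).elim_finite_subcover_image
    (fun u _ => Metric.isOpen_ball) cover
  obtain ⟨M, hM1, hM⟩ := exists_index 𝒯 h𝒯sub hbfin.toFinset (by
    intro u hu
    have := hbsub (hbfin.mem_toFinset.mp hu)
    simp only [Set.mem_iUnion, Set.mem_Ici, exists_prop] at this
    obtain ⟨m, hm1, hmu⟩ := this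
    exact ⟨m, hm1, hmu⟩)
  have hnet : ∀ t ∈ Set.Icc (0:ℝ) 1, ∃ τ ∈ 𝒯 M, |t - τ| < δ := by
    intro t ht
    have := hbcov ht
    simp only [Set.mem_iUnion, exists_prop] at this
    obtain ⟨u, hub, hu⟩ := this
    exact ⟨u, hM u (hbfin.mem_toFinset.mpr hub), by
      simpa [Real.dist_eq] using Metric.mem_ball.mp hu⟩
  -- main estimate for M ≤ m ≤ n
  have key : ∀ m n : ℕ, M ≤ m → m ≤ n →
      levyProkhorovDist (μ.map (F m)) (μ.map (F n)) ≤ 3 * δ := by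
    intro m n hm hmn
    have hm1 : 1 ≤ m := le_trans hM1 hm
    have hn1 : 1 ≤ n := le_trans hm1 hmn
    apply lp_le μ (hFmeas m hm1) (hFmeas n hn1) (by positivity)
    intro ω
    rw [hdist]
    apply ciSup_le
    intro x
    have hsh : ∀ τ ∈ 𝒯 M, ∃ y, (F m ω x).1 y = τ ∧ (F n ω x).1 y = τ := by
      intro τ hτ
      exact hshare ω m n hm1 hmn x τ (T_mono 𝒯 h𝒯sub M m hM1 hm hτ)
    apply levyDist_le_of_pointwise (F m ω x).2.1 (by positivity)
    · exact pointwise_of_shared (F m ω x).2 (F n ω x).2 (𝒯 M) hδ hnet hsh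
    · exact pointwise_of_shared (F n ω x).2 (F m ω x).2 (𝒯 M) hδ hnet
        (fun τ hτ => (hsh τ hτ).imp (fun y hy => ⟨hy.2, hy.1⟩))
  refine ⟨M, hM1, fun m n hm hn => ?_⟩
  have h3 : 3 * δ < ε := by rw [hδdef]; linarith
  rcases le_total m n with h | h
  · exact lt_of_le_of_lt (key m n hm h) h3
  · rw [levyProkhorovDist_comm]
    exact lt_of_le_of_lt (key n m hn h) h3
end

section
/- Let (Ω, ℬ, μ) be a probability space and S = {x₁, …, x_n} a finite index set. For each m ≥ 1, let 𝒯_m ⊂ (0,1) be a finite set of quantile levels with 𝒯_m ⊆ 𝒯_{m+1}, and suppose ∪_{m=1}^∞ 𝒯_m is dense in [0,1]. Let D be the space of distribution functions on [0,1] with the Lévy metric, and let F^m : Ω → D^S be Borel measurable maps (D^S equipped with the supremum Lévy metric d_{L_u}) such that for every ω ∈ Ω, all m ≤ n, every x ∈ S, and every τ ∈ 𝒯_m there exists a point y with F_x^m(ω)(y) = F_x^n(ω)(y) = τ. Then there exists a Borel probability measure μ_∞ on D^S such that the pushforward measures μ_m = (F^m)_*μ converge to μ_∞ in the Prokhorov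 metric induced by d_{L_u}; that is, the joint law of the dependent quantile pyramids at the finite set of covariate values {x₁, …, x_n} exists as the limit of the finite-level constructions. -/
open MeasureTheory Filter Set

/-! If two distribution functions on `[0,1]` attain every level of a `δ`-dense set `T ⊆ (0,1)` at
common points, they are `2δ`-close in sup norm: a larger gap `F y + 2δ < G y` would contain a
shared level `τ = F z = G z`, and monotonicity fails on one side of `y`. By compactness of `[0,1]`
a single `𝒯_M` is already `δ`-dense, so the `F^m` are uniformly Cauchy, uniformly in `ω`, `x` and
`y`. Their uniform limit is again a family of distribution functions, the Lévy distance is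
dominated by the sup distance, and uniform convergence of measurable maps implies convergence of
their laws in the Lévy–Prokhorov metric. -/

open Metric
open scoped Topology

theorem exists_subset_thickening_of_subset_closure_iUnion {X ι : Type*} [PseudoMetricSpace X]
    [Preorder ι] [IsDirectedOrder ι] [Nonempty ι] {K : Set X} (hK : IsCompact K)
    {A : ι → Set X} (hA : Monotone A) (hKA : K ⊆ closure (⋃ i, A i)) {δ : ℝ} (hδ : 0 < δ) :
    ∃ i, K ⊆ thickening δ (A i) :=
  hK.elim_directed_cover _ (fun _ => isOpen_thickening)
    (hKA.trans <| (closure_subset_thickening hδ _).trans (thickening_iUnion δ A).subset)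
    (Monotone.directed_le fun _ _ hij => thickening_subset_of_subset δ (hA hij))

theorem le_add_of_forall_shared_level {F G : ℝ → ℝ} (hF : Monotone F) (hG : Monotone G)
    (hF0 : ∀ y, 0 ≤ F y) (hG1 : ∀ y, G y ≤ 1) {T : Set ℝ} {δ : ℝ} (hδ : 0 < δ)
    (hT : Ioo 0 1 ⊆ thickening δ T) (hFG : ∀ τ ∈ T, ∃ z, F z = τ ∧ G z = τ) (y : ℝ) :
    G y ≤ F y + 2 * δ := by
  by_contra! hgap
  obtain ⟨τ, hτT, hτ⟩ := mem_thickening_iff.1 <|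
    hT (show F y + δ ∈ Ioo 0 1 from ⟨by linarith [hF0 y], by linarith [hG1 y]⟩)
  rw [Real.dist_eq, abs_lt] at hτ
  obtain ⟨z, hFz, hGz⟩ := hFG τ hτT
  have hyz : y < z := hF.reflect_lt (by linarith)
  linarith [hG hyz.le]

theorem IsDistFunOn01.abs_sub_le_of_forall_shared_level {F G : ℝ → ℝ} (hF : IsDistFunOn01 F)
    (hG : IsDistFunOn01 G) {T : Set ℝ} {δ : ℝ} (hδ : 0 < δ) (hT : Ioo 0 1 ⊆ thickening δ T)
    (hFG : ∀ τ ∈ T, ∃ z, F z = τ ∧ G z = τ) (y : ℝ) : |F y - G y| ≤ 2 * δ := by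
  have hGF : ∀ τ ∈ T, ∃ z, G z = τ ∧ F z = τ := fun τ hτ => (hFG τ hτ).imp fun _ => And.symm
  have h₁ := le_add_of_forall_shared_level hF.1 hG.1 (fun y => (hF.2.2.1 y).1)
    (fun y => (hG.2.2.1 y).2) hδ hT hFG y
  have h₂ := le_add_of_forall_shared_level hG.1 hF.1 (fun y => (hG.2.2.1 y).1)
    (fun y => (hF.2.2.1 y).2) hδ hT hGF y
  exact abs_sub_le_iff.2 ⟨by linarith, by linarith⟩

theorem IsDistFunOn01.of_tendstoUniformly {ι : Type*} {l : Filter ι} [l.NeBot]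
    {Φ : ι → ℝ → ℝ} {G : ℝ → ℝ} (hΦ : ∀ n, IsDistFunOn01 (Φ n)) (h : TendstoUniformly Φ G l) :
    IsDistFunOn01 G := by
  have hlim := h.tendsto_at
  refine ⟨fun a b hab => le_of_tendsto_of_tendsto' (hlim a) (hlim b) fun n => (hΦ n).1 hab,
    fun y => ?_, fun y => isClosed_Icc.mem_of_tendsto (hlim y) (.of_forall fun n => (hΦ n).2.2.1 y),
    fun y hy => tendsto_nhds_unique (hlim y) ?_, fun y hy => tendsto_nhds_unique (hlim y) ?_⟩
  · refine continuousWithinAt_of_locally_uniform_approx_of_continuousWithinAt self_mem_Ici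
      fun u hu => ?_
    obtain ⟨n, hn⟩ := (h u hu).exists
    exact ⟨univ, univ_mem, Φ n, (hΦ n).2.1 y, fun z _ => hn z⟩
  · exact tendsto_const_nhds.congr fun n => ((hΦ n).2.2.2.1 y hy).symm
  · exact tendsto_const_nhds.congr fun n => ((hΦ n).2.2.2.2 y hy).symm

theorem levyDist_le_of_forall_abs_sub_le {F G : ℝ → ℝ} (hF : Monotone F) {ε : ℝ} (hε : 0 ≤ ε)
    (h : ∀ y, |F y - G y| ≤ ε) : levyDist F G ≤ ε := by
  refine le_of_forall_pos_le_add fun t ht => csInf_le ⟨0, fun r hr => hr.1.le⟩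
    ⟨by linarith, fun y => ?_⟩
  have hy := abs_le.1 (h y)
  have hleft : F (y - (ε + t)) ≤ F y := hF (by linarith)
  have hright : F y ≤ F (y + (ε + t)) := hF (by linarith)
  constructor <;> linarith [hy.1, hy.2]

section SharedLevels

variable {α : Type*} {Φ : ℕ → α → DistFun01} {𝒯 : ℕ → Set ℝ}

theorem uniformCauchySeqOn_of_forall_shared_level (h𝒯 : Monotone 𝒯)
    (hdense : Icc 0 1 ⊆ closure (⋃ m, 𝒯 m))
    (hshare : ∀ a m n, m ≤ n → ∀ τ ∈ 𝒯 m, ∃ y, (Φ m a).1 y = τ ∧ (Φ n a).1 y = τ) :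
    UniformCauchySeqOn (fun n (p : α × ℝ) => (Φ n p.1).1 p.2) atTop univ := by
  refine Metric.uniformCauchySeqOn_iff.2 fun ε hε => ?_
  obtain ⟨M, hM⟩ := exists_subset_thickening_of_subset_closure_iUnion isCompact_Icc h𝒯 hdense
    (by positivity : 0 < ε / 3)
  have hclose : ∀ m n, M ≤ m → m ≤ n → ∀ p : α × ℝ,
      dist ((Φ m p.1).1 p.2) ((Φ n p.1).1 p.2) < ε := fun m n hm hmn p => by
    have hT : Ioo 0 1 ⊆ thickening (ε / 3) (𝒯 m) :=
      Ioo_subset_Icc_self.trans (hM.trans (thickening_subset_of_subset _ (h𝒯 hm)))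
    rw [Real.dist_eq]
    linarith [(Φ m p.1).2.abs_sub_le_of_forall_shared_level (Φ n p.1).2 (by positivity) hT
      (hshare p.1 m n hmn) p.2]
  refine ⟨M, fun m hm n hn p _ => ?_⟩
  rcases le_total m n with hmn | hnm
  · exact hclose m n hm hmn p
  · rw [dist_comm]
    exact hclose n m hn hnm p

theorem exists_tendstoUniformly_of_forall_shared_level (h𝒯 : Monotone 𝒯)
    (hdense : Icc 0 1 ⊆ closure (⋃ m, 𝒯 m))
    (hshare : ∀ a m n, m ≤ n → ∀ τ ∈ 𝒯 m, ∃ y, (Φ m a).1 y = τ ∧ (Φ n a).1 y = τ) :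
    ∃ Ψ : α → DistFun01, TendstoUniformly (fun n (p : α × ℝ) => (Φ n p.1).1 p.2)
      (fun p => (Ψ p.1).1 p.2) atTop := by
  have hC := uniformCauchySeqOn_of_forall_shared_level h𝒯 hdense hshare
  choose g hg using fun p : α × ℝ => cauchySeq_tendsto_of_complete (hC.cauchySeq (mem_univ p))
  have hlim := tendstoUniformlyOn_univ.1 (hC.tendstoUniformlyOn_of_tendsto fun p _ => hg p)
  exact ⟨fun a => ⟨fun y => g (a, y),
    IsDistFunOn01.of_tendstoUniformly (fun n => (Φ n a).2) (hlim.comp (a, ·))⟩, hlim⟩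

end SharedLevels

section LevyProkhorov

variable {Ω X : Type*} [MeasurableSpace Ω] [PseudoMetricSpace X] [MeasurableSpace X]
  [OpensMeasurableSpace X] (μ : Measure Ω) {f g : Ω → X}

theorem map_apply_le_map_apply_thickening (hf : Measurable f) (hg : Measurable g) {r : ℝ}
    (h : ∀ ω, dist (f ω) (g ω) < r) {B : Set X} (hB : MeasurableSet B) :
    μ.map f B ≤ μ.map g (thickening r B) := by
  rw [Measure.map_apply hf hB, Measure.map_apply hg isOpen_thickening.measurableSet]
  exact measure_mono fun ω hω => mem_thickening_iff.2 ⟨f ω, hω, dist_comm (f ω) _ ▸ h ω⟩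

theorem levyProkhorovDist_map_le_of_forall_dist_le (hf : Measurable f) (hg : Measurable g)
    {ε : ℝ} (hε : 0 ≤ ε) (h : ∀ ω, dist (f ω) (g ω) ≤ ε) :
    levyProkhorovDist (μ.map f) (μ.map g) ≤ ε := by
  refine ENNReal.toReal_le_of_le_ofReal hε <| levyProkhorovEDist_le_of_forall _ _ _
    fun ε' B hε' hε'top hB => ?_
  have hlt : ∀ ω, dist (f ω) (g ω) < ε'.toReal := fun ω =>
    (h ω).trans_lt ((ENNReal.ofReal_lt_iff_lt_toReal hε hε'top.ne).1 hε')
  exact ⟨le_add_right (map_apply_le_map_apply_thickening μ hf hg hlt hB),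
    le_add_right <| map_apply_le_map_apply_thickening μ hg hf
      (fun ω => dist_comm (f ω) _ ▸ hlt ω) hB⟩

theorem tendsto_levyProkhorovDist_map_of_tendstoUniformly {ι : Type*} {l : Filter ι}
    {F : ι → Ω → X} (hF : ∀ n, Measurable (F n)) (hg : Measurable g)
    (h : TendstoUniformly F g l) :
    Tendsto (fun n => levyProkhorovDist (μ.map (F n)) (μ.map g)) l (𝓝 0) := by
  refine Metric.tendsto_nhds.2 fun ε hε => ?_
  filter_upwards [Metric.tendstoUniformly_iff.1 h (ε / 2) (half_pos hε)] with n hn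
  rw [Real.dist_0_eq_abs, abs_of_nonneg (by exact ENNReal.toReal_nonneg)]
  exact (levyProkhorovDist_map_le_of_forall_dist_le μ (hF n) hg (half_pos hε).le
    fun ω => (dist_comm (F n ω) _ ▸ hn ω).le).trans_lt (half_lt_self hε)

end LevyProkhorov

theorem pushforward_tendsto_limit_in_prokhorov_sup_general
    {Ω S : Type*} [MeasurableSpace Ω] (μ : Measure Ω) [IsProbabilityMeasure μ]
    [MetricSpace (S → DistFun01)] [MeasurableSpace (S → DistFun01)]
    [BorelSpace (S → DistFun01)]
    (hdist : ∀ F G : S → DistFun01, dist F G = ⨆ x : S, levyDist (F x).1 (G x).1)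
    (𝒯 : ℕ → Finset ℝ)
    (h𝒯sub : ∀ m, 1 ≤ m → 𝒯 m ⊆ 𝒯 (m + 1))
    (hdense : Set.Icc (0 : ℝ) 1 ⊆ closure (⋃ m ∈ Set.Ici 1, ((𝒯 m : Set ℝ))))
    (F : ℕ → Ω → S → DistFun01)
    (hFmeas : ∀ m, 1 ≤ m → Measurable (F m))
    (hshare : ∀ (ω : Ω) (m n : ℕ), 1 ≤ m → m ≤ n → ∀ x : S, ∀ τ ∈ 𝒯 m,
      ∃ y : ℝ, (F m ω x).1 y = τ ∧ (F n ω x).1 y = τ) :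
    ∃ μ_inf : Measure (S → DistFun01), IsProbabilityMeasure μ_inf ∧
      Filter.Tendsto (fun m : ℕ => levyProkhorovDist (μ.map (F m)) μ_inf)
        Filter.atTop (nhds 0) := by
  have h𝒯 : Monotone fun k => (𝒯 (k + 1) : Set ℝ) :=
    monotone_nat_of_le_succ fun k => Finset.coe_subset.2 (h𝒯sub (k + 1) k.succ_pos)
  have hunion : ⋃ m ∈ Ici 1, (𝒯 m : Set ℝ) = ⋃ k, (𝒯 (k + 1) : Set ℝ) :=
    iUnion_ge_eq_iUnion_nat_add _ 1
  obtain ⟨Ψ, hΨ⟩ := exists_tendstoUniformly_of_forall_shared_level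
    (Φ := fun k (p : Ω × S) => F (k + 1) p.1 p.2) h𝒯 (hunion ▸ hdense)
    fun p m n hmn => hshare p.1 (m + 1) (n + 1) (by omega) (by omega) p.2
  set L : Ω → S → DistFun01 := fun ω x => Ψ (ω, x)
  have hFL : TendstoUniformly (fun k => F (k + 1)) L atTop := by
    refine Metric.tendstoUniformly_iff.2 fun ε hε => ?_
    filter_upwards [Metric.tendstoUniformly_iff.1 hΨ (ε / 2) (half_pos hε)] with k hk ω
    rw [hdist]
    exact (Real.iSup_le (fun x => levyDist_le_of_forall_abs_sub_le (Ψ (ω, x)).2.1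
      (half_pos hε).le fun y => (hk ((ω, x), y)).le) (half_pos hε).le).trans_lt (half_lt_self hε)
  have hFmeas' : ∀ k, Measurable (F (k + 1)) := fun k => hFmeas (k + 1) k.succ_pos
  have hL : Measurable L :=
    measurable_of_tendsto_metrizable' atTop hFmeas' (tendsto_pi_nhds.2 hFL.tendsto_at)
  exact ⟨μ.map L, Measure.isProbabilityMeasure_map hL.aemeasurable,
    (tendsto_add_atTop_iff_nat 1).1
      (tendsto_levyProkhorovDist_map_of_tendstoUniformly μ hFmeas' hL hFL)⟩

/-- Suppose `D^S`, the space of `S`-indexed families of distribution functions on `[0,1]` for a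
finite nonempty index set `S`, is equipped with the supremum Lévy metric
`d_{L_u}(F, G) = max_{x ∈ S} d_L(F_x, G_x)`, and `F^m : Ω → D^S` are Borel measurable maps such
that, for all `ω` and all `x ∈ S`, any `F_x^m(ω)` and `F_x^n(ω)` with `1 ≤ m ≤ n` share a point
realizing each quantile level `τ ∈ 𝒯_m`, where the finite sets `𝒯_m ⊂ (0,1)` are nested with
union dense in `[0,1]`.  Then the pushforward probability measures `μ_m = (F^m)_*μ` converge,
in the Prokhorov metric induced by `d_{L_u}`, to some Borel probability measure `μ_∞` on `D^S`:
the joint law of the dependent quantile pyramids at the finite set of covariate values exists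
as the limit of the finite-level constructions. -/
theorem pushforward_tendsto_limit_in_prokhorov_sup
    {Ω S : Type*} [MeasurableSpace Ω] (μ : Measure Ω) [IsProbabilityMeasure μ]
    [Fintype S] [Nonempty S]
    [MetricSpace (S → DistFun01)] [MeasurableSpace (S → DistFun01)]
    [BorelSpace (S → DistFun01)]
    (hdist : ∀ F G : S → DistFun01, dist F G = ⨆ x : S, levyDist (F x).1 (G x).1)
    (𝒯 : ℕ → Finset ℝ)
    (h𝒯sub : ∀ m, 1 ≤ m → 𝒯 m ⊆ 𝒯 (m + 1))
    (h𝒯mem : ∀ m, 1 ≤ m → ∀ τ ∈ 𝒯 m, τ ∈ Set.Ioo (0 : ℝ) 1)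
    (hdense : Set.Icc (0 : ℝ) 1 ⊆ closure (⋃ m ∈ Set.Ici 1, ((𝒯 m : Set ℝ))))
    (F : ℕ → Ω → S → DistFun01)
    (hFmeas : ∀ m, 1 ≤ m → Measurable (F m))
    (hshare : ∀ (ω : Ω) (m n : ℕ), 1 ≤ m → m ≤ n → ∀ x : S, ∀ τ ∈ 𝒯 m,
      ∃ y : ℝ, (F m ω x).1 y = τ ∧ (F n ω x).1 y = τ) :
    ∃ μ_inf : Measure (S → DistFun01), IsProbabilityMeasure μ_inf ∧
      Filter.Tendsto (fun m : ℕ => levyProkhorovDist (μ.map (F m)) μ_inf)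
        Filter.atTop (nhds 0) :=
  pushforward_tendsto_limit_in_prokhorov_sup_general μ hdist 𝒯 h𝒯sub hdense F hFmeas hshare
end
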